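/- (Right-handed Ackermann lemma.) Let p be a propositional variable, let θ₁,…,θ_n be L(@)^+-formulas not containing p, and let η₁ ≤ ι₁, …, η_m ≤ ι_m be inequalities of L(@)^+-formulas such that every occurrence of p in each η_j is positive and every occurrence of p in each ι_j is negative. Set θ := θ₁ ∨ … ∨ θ_n (with θ := ⊥ when n = 0). Then for every frame F = (W,R) and every valuation V: there exists a valuation V′ that agrees with V on all propositional variables other than p and on all nominals, such that (F,V′) ⊨ θ_i ≤ p for all 1 ≤ i ≤ n and (F,V′) ⊨ η_j ≤ ι_j for all 1 ≤ j ≤ m, if and only if (F,V) ⊨ η_j[θ/p] ≤ ι_j[θ/p] for all 1 ≤ j ≤ m, where [θ/p] denotes uniform substitution of θ for p. -/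

import Mathlib

/-- Formulas of the expanded hybrid language L(@)⁺: L(@) together with the
converse modalities ◆ (`bdia`) and ■ (`bbox`).  Propositional variables and
nominals are indexed by natural numbers. -/
inductive HFormP : Type
  | prop : ℕ → HFormP
  | nom : ℕ → HFormP
  | bot : HFormP
  | top : HFormP
  | neg : HFormP → HFormP
  | or : HFormP → HFormP → HFormP
  | and : HFormP → HFormP → HFormP
  | imp : HFormP → HFormP → HFormP
  | dia : HFormP → HFormP
  | box : HFormP → HFormP
  | at' : ℕ → HFormP → HFormP
  | bdia : HFormP → HFormP
  | bbox : HFormP → HFormP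

/-- Satisfaction in a model `(W, R, V)`, where the valuation is split into `Vp`
(for propositional variables) and `Vn` (assigning to each nominal the unique
world in its singleton truth set). -/
def sat {W : Type} (R : W → W → Prop) (Vp : ℕ → Set W) (Vn : ℕ → W) : W → HFormP → Prop
  | w, .prop p => w ∈ Vp p
  | w, .nom i => w = Vn i
  | _, .bot => False
  | _, .top => True
  | w, .neg φ => ¬ sat R Vp Vn w φ
  | w, .or φ ψ => sat R Vp Vn w φ ∨ sat R Vp Vn w ψ
  | w, .and φ ψ => sat R Vp Vn w φ ∧ sat R Vp Vn w ψ
  | w, .imp φ ψ => sat R Vp Vn w φ → sat R Vp Vn w ψ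
  | w, .dia φ => ∃ v, R w v ∧ sat R Vp Vn v φ
  | w, .box φ => ∀ v, R w v → sat R Vp Vn v φ
  | _, .at' i φ => sat R Vp Vn (Vn i) φ
  | w, .bdia φ => ∃ v, R v w ∧ sat R Vp Vn v φ
  | w, .bbox φ => ∀ v, R v w → sat R Vp Vn v φ

/-- The inequality `φ ≤ ψ` holds in a model iff the truth set of `φ` is
included in the truth set of `ψ`. -/
def leq {W : Type} (R : W → W → Prop) (Vp : ℕ → Set W) (Vn : ℕ → W) (φ ψ : HFormP) : Prop :=
  ∀ w : W, sat R Vp Vn w φ → sat R Vp Vn w ψ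

mutual
  /-- Every occurrence of the propositional variable p in the formula is
  positive (lies under an even number of polarity reversals: ¬ and the
  antecedent of → reverse polarity, all other connectives preserve it). -/
  def allPos (p : ℕ) : HFormP → Prop
    | .prop _ => True
    | .nom _ => True
    | .bot => True
    | .top => True
    | .neg φ => allNeg p φ
    | .or φ ψ => allPos p φ ∧ allPos p ψ
    | .and φ ψ => allPos p φ ∧ allPos p ψ
    | .imp φ ψ => allNeg p φ ∧ allPos p ψ
    | .dia φ => allPos p φ
    | .box φ => allPos p φ
    | .at' _ φ => allPos p φ
    | .bdia φ => allPos p φ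
    | .bbox φ => allPos p φ

  /-- Every occurrence of the propositional variable p in the formula is
  negative (lies under an odd number of polarity reversals). -/
  def allNeg (p : ℕ) : HFormP → Prop
    | .prop q => q ≠ p
    | .nom _ => True
    | .bot => True
    | .top => True
    | .neg φ => allPos p φ
    | .or φ ψ => allNeg p φ ∧ allNeg p ψ
    | .and φ ψ => allNeg p φ ∧ allNeg p ψ
    | .imp φ ψ => allPos p φ ∧ allNeg p ψ
    | .dia φ => allNeg p φ
    | .box φ => allNeg p φ
    | .at' _ φ => allNeg p φ
    | .bdia φ => allNeg p φ
    | .bbox φ => allNeg p φ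
end

/-- The propositional variable p occurs in the formula. -/
def propOccurs (p : ℕ) : HFormP → Prop
  | .prop q => q = p
  | .nom _ => False
  | .bot => False
  | .top => False
  | .neg φ => propOccurs p φ
  | .or φ ψ => propOccurs p φ ∨ propOccurs p ψ
  | .and φ ψ => propOccurs p φ ∨ propOccurs p ψ
  | .imp φ ψ => propOccurs p φ ∨ propOccurs p ψ
  | .dia φ => propOccurs p φ
  | .box φ => propOccurs p φ
  | .at' _ φ => propOccurs p φ
  | .bdia φ => propOccurs p φ
  | .bbox φ => propOccurs p φ

/-- Uniform substitution of the formula θ for the propositional variable p. -/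
def substProp (p : ℕ) (θ : HFormP) : HFormP → HFormP
  | .prop q => if q = p then θ else .prop q
  | .nom i => .nom i
  | .bot => .bot
  | .top => .top
  | .neg φ => .neg (substProp p θ φ)
  | .or φ ψ => .or (substProp p θ φ) (substProp p θ ψ)
  | .and φ ψ => .and (substProp p θ φ) (substProp p θ ψ)
  | .imp φ ψ => .imp (substProp p θ φ) (substProp p θ ψ)
  | .dia φ => .dia (substProp p θ φ)
  | .box φ => .box (substProp p θ φ)
  | .at' i φ => .at' i (substProp p θ φ)
  | .bdia φ => .bdia (substProp p θ φ)
  | .bbox φ => .bbox (substProp p θ φ)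

/-- Disjunction of a list of formulas; the empty disjunction is ⊥. -/
def bigOr : List HFormP → HFormP
  | [] => .bot
  | [φ] => φ
  | φ :: rest => .or φ (bigOr rest)

/-- Conjunction of a list of formulas; the empty conjunction is ⊤. -/
def bigAnd : List HFormP → HFormP
  | [] => .top
  | [φ] => φ
  | φ :: rest => .and φ (bigAnd rest)

/-! Let `T` be the truth set of `θ` and `V₀` the valuation sending `p` to `T`. Since the `θᵢ` do
not contain `p`, `V₀` is the least valuation (varying only `p`) validating every `θᵢ ≤ p`, and
`ηⱼ[θ/p] ≤ ιⱼ[θ/p]` holds at `V` exactly when `ηⱼ ≤ ιⱼ` holds at `V₀`. As `ηⱼ` is monotone and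
`ιⱼ` antitone in `p`, an inequality `ηⱼ ≤ ιⱼ` valid at a valuation above `V₀` is valid at `V₀`. -/

section Semantics

variable {W : Type} {R : W → W → Prop} {Vp Vp' : ℕ → Set W} {Vn : ℕ → W} {p : ℕ}

theorem sat_congr_of_not_propOccurs (hagree : ∀ q, q ≠ p → Vp q = Vp' q) (φ : HFormP)
    (hφ : ¬ propOccurs p φ) (w : W) : sat R Vp Vn w φ ↔ sat R Vp' Vn w φ := by
  induction φ generalizing w with
  | prop q => simp only [propOccurs] at hφ; simp only [sat, hagree q hφ]
  | dia _ ih | box _ ih | bdia _ ih | bbox _ ih =>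
    simp only [propOccurs] at hφ; simp only [sat, ih hφ]
  | at' _ _ ih => exact ih hφ _
  | neg _ ih => exact not_congr (ih hφ w)
  | or _ _ ih₁ ih₂ | and _ _ ih₁ ih₂ | imp _ _ ih₁ ih₂ =>
    simp only [propOccurs, not_or] at hφ
    simp only [sat, ih₁ hφ.1, ih₂ hφ.2]
  | nom | bot | top => rfl

theorem sat_mono_of_allPos_and_anti_of_allNeg (hagree : ∀ q, q ≠ p → Vp q = Vp' q)
    (hsub : Vp p ⊆ Vp' p) (φ : HFormP) (w : W) :
    (allPos p φ → sat R Vp Vn w φ → sat R Vp' Vn w φ) ∧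
      (allNeg p φ → sat R Vp' Vn w φ → sat R Vp Vn w φ) := by
  induction φ generalizing w with
  | prop q =>
    by_cases hq : q = p
    · subst hq; exact ⟨fun _ hw => hsub hw, fun hq => absurd rfl hq⟩
    · simp only [sat, hagree q hq]; exact ⟨fun _ => id, fun _ => id⟩
  | nom | bot | top => exact ⟨fun _ => id, fun _ => id⟩
  | neg _ ih => exact ⟨fun h hw hc => hw ((ih w).2 h hc), fun h hw hc => hw ((ih w).1 h hc)⟩
  | or _ _ ih₁ ih₂ =>
    exact ⟨fun h => Or.imp ((ih₁ w).1 h.1) ((ih₂ w).1 h.2),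
      fun h => Or.imp ((ih₁ w).2 h.1) ((ih₂ w).2 h.2)⟩
  | and _ _ ih₁ ih₂ =>
    exact ⟨fun h => And.imp ((ih₁ w).1 h.1) ((ih₂ w).1 h.2),
      fun h => And.imp ((ih₁ w).2 h.1) ((ih₂ w).2 h.2)⟩
  | imp _ _ ih₁ ih₂ =>
    exact ⟨fun h hw hc => (ih₂ w).1 h.2 (hw ((ih₁ w).2 h.1 hc)),
      fun h hw hc => (ih₂ w).2 h.2 (hw ((ih₁ w).1 h.1 hc))⟩
  | dia _ ih | bdia _ ih =>
    exact ⟨fun h ⟨v, hv, hs⟩ => ⟨v, hv, (ih v).1 h hs⟩, fun h ⟨v, hv, hs⟩ => ⟨v, hv, (ih v).2 h hs⟩⟩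
  | box _ ih | bbox _ ih =>
    exact ⟨fun h hw v hv => (ih v).1 h (hw v hv), fun h hw v hv => (ih v).2 h (hw v hv)⟩
  | at' _ _ ih => exact ⟨(ih _).1, (ih _).2⟩

theorem leq_of_leq_of_allPos_of_allNeg (hagree : ∀ q, q ≠ p → Vp q = Vp' q)
    (hsub : Vp p ⊆ Vp' p) {η ι : HFormP} (hη : allPos p η) (hι : allNeg p ι)
    (h : leq R Vp' Vn η ι) : leq R Vp Vn η ι := fun w hw =>
  (sat_mono_of_allPos_and_anti_of_allNeg hagree hsub ι w).2 hι
    (h w ((sat_mono_of_allPos_and_anti_of_allNeg hagree hsub η w).1 hη hw))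

theorem sat_substProp (θ φ : HFormP) (w : W) :
    sat R Vp Vn w (substProp p θ φ) ↔
      sat R (Function.update Vp p {v | sat R Vp Vn v θ}) Vn w φ := by
  induction φ generalizing w with
  | prop q =>
    by_cases hq : q = p
    · subst hq; simp [substProp, sat]
    · simp [substProp, hq, sat]
  | dia _ ih | box _ ih | bdia _ ih | bbox _ ih => simp only [substProp, sat, ih]
  | at' _ _ ih => exact ih _
  | neg _ ih => exact not_congr (ih w)
  | or _ _ ih₁ ih₂ | and _ _ ih₁ ih₂ | imp _ _ ih₁ ih₂ => simp only [substProp, sat, ih₁, ih₂]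
  | nom | bot | top => rfl

theorem leq_substProp_iff (θ η ι : HFormP) :
    leq R Vp Vn (substProp p θ η) (substProp p θ ι) ↔
      leq R (Function.update Vp p {v | sat R Vp Vn v θ}) Vn η ι := by
  simp only [leq, sat_substProp]

theorem sat_bigOr (L : List HFormP) (w : W) :
    sat R Vp Vn w (bigOr L) ↔ ∃ φ ∈ L, sat R Vp Vn w φ := by
  induction L with
  | nil => simp [bigOr, sat]
  | cons φ rest ih =>
    cases rest with
    | nil => simp [bigOr]
    | cons ψ rest => simp only [bigOr, sat, ih, List.exists_mem_cons_iff]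

theorem forall_leq_prop_iff_subset {n : ℕ} {θs : Fin n → HFormP}
    (hθ : ∀ i, ¬ propOccurs p (θs i)) (hagree : ∀ q, q ≠ p → Vp' q = Vp q) :
    (∀ i, leq R Vp' Vn (θs i) (.prop p)) ↔ {v | sat R Vp Vn v (bigOr (List.ofFn θs))} ⊆ Vp' p := by
  simp only [leq, Set.subset_def, Set.mem_ofPred_eq, sat_bigOr, List.mem_ofFn,
    exists_exists_eq_and, sat, sat_congr_of_not_propOccurs hagree _ (hθ _)]
  exact ⟨fun h w ⟨i, hi⟩ => h i w hi, fun h i w hi => h w ⟨i, hi⟩⟩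

end Semantics

/-- Right-handed Ackermann lemma.  Let p be a propositional variable,
θ₁,…,θₙ L(@)⁺-formulas not containing p, and η₁ ≤ ι₁, …, η_m ≤ ι_m
inequalities with each ηⱼ positive in p and each ιⱼ negative in p.  Let
θ := θ₁ ∨ … ∨ θₙ (θ := ⊥ when n = 0).  Then for every frame (W,R) and
valuation (Vp,Vn): there is a valuation Vp' agreeing with Vp on every
propositional variable other than p (the nominal part Vn being unchanged)
such that θᵢ ≤ p and ηⱼ ≤ ιⱼ all hold in (W,R,Vp',Vn), iff
ηⱼ[θ/p] ≤ ιⱼ[θ/p] holds in (W,R,Vp,Vn) for all j. -/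
theorem right_handed_ackermann {W : Type} (hW : Nonempty W) (R : W → W → Prop)
    (p : ℕ) (n m : ℕ) (θs : Fin n → HFormP) (ηs ιs : Fin m → HFormP)
    (hθ : ∀ i : Fin n, ¬ propOccurs p (θs i))
    (hη : ∀ j : Fin m, allPos p (ηs j))
    (hι : ∀ j : Fin m, allNeg p (ιs j))
    (Vp : ℕ → Set W) (Vn : ℕ → W) :
    (∃ Vp' : ℕ → Set W, (∀ q : ℕ, q ≠ p → Vp' q = Vp q) ∧
        (∀ i : Fin n, leq R Vp' Vn (θs i) (.prop p)) ∧
        (∀ j : Fin m, leq R Vp' Vn (ηs j) (ιs j))) ↔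
    (∀ j : Fin m,
        leq R Vp Vn (substProp p (bigOr (List.ofFn θs)) (ηs j))
          (substProp p (bigOr (List.ofFn θs)) (ιs j))) := by
  set T := {v | sat R Vp Vn v (bigOr (List.ofFn θs))}
  set V₀ := Function.update Vp p T
  have hV₀ : ∀ q, q ≠ p → V₀ q = Vp q := fun q hq => Function.update_of_ne hq _ _
  have hV₀p : V₀ p = T := Function.update_self ..
  simp only [leq_substProp_iff]
  constructor
  · rintro ⟨Vp', hagree, hθp, hηι⟩ j
    have hmin : V₀ p ⊆ Vp' p := hV₀p ▸ (forall_leq_prop_iff_subset hθ hagree).1 hθp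
    exact leq_of_leq_of_allPos_of_allNeg (fun q hq => (hV₀ q hq).trans (hagree q hq).symm) hmin
      (hη j) (hι j) (hηι j)
  · intro h
    exact ⟨V₀, hV₀, (forall_leq_prop_iff_subset hθ hV₀).2 hV₀p.ge, h⟩
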